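/- arXiv:1104.1560 — 4 statements merged into one kernel-verified Lean document; each statement's English description precedes it below -/
import Mathlib

section
/- Let V be a finite set, (K_i)_{i≥1} a sequence of Markov kernels on V, μ_0 a positive probability measure with μ_n = μ_0K_1⋯K_n positive for all n. For any n ≥ 1, the operator norm of K_{0,n} − μ_n from ℓ²(μ_n) to ℓ²(μ_0) is at most the product ∏_{i=1}^n σ₁(K_i,μ_{i−1}), where for each i, σ₁(K_i,μ_{i−1}) = ‖K_i − μ_i‖_{ℓ²(μ_i)→ℓ²(μ_{i−1})} and a measure ν is identified with the rank-one operator f ↦ ν(f)·𝟙 (ν(f) = Σ_x ν(x)f(x)). -/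
open Finset

noncomputable section

namespace TimeInhomog

variable {V : Type*} [Fintype V] [DecidableEq V]

/-- A (row-stochastic) Markov kernel on a finite set `V`. -/
def IsKernel (K : V → V → ℝ) : Prop :=
  (∀ x y, 0 ≤ K x y) ∧ ∀ x, ∑ y, K x y = 1

/-- Action of a kernel on a measure: `(μK)(y) = ∑ₓ μ(x) K(x,y)`. -/
def mulMK (μ : V → ℝ) (K : V → V → ℝ) : V → ℝ :=
  fun y => ∑ x, μ x * K x y

/-- Action of a kernel on a function: `(Kf)(x) = ∑_y K(x,y) f(y)`. -/
def mulKF (K : V → V → ℝ) (f : V → ℝ) : V → ℝ :=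
  fun x => ∑ y, K x y * f y

/-- Product of two kernels (matrix product). -/
def mulKK (K L : V → V → ℝ) : V → V → ℝ :=
  fun x y => ∑ z, K x z * L z y

/-- The identity kernel. -/
def idK : V → V → ℝ :=
  fun x y => if x = y then 1 else 0

/-- `muSeq μ0 K n = μ_n = μ0 K_1 K_2 ⋯ K_n`. -/
def muSeq (μ0 : V → ℝ) (K : ℕ → V → V → ℝ) : ℕ → V → ℝ
  | 0 => μ0
  | n + 1 => mulMK (muSeq μ0 K n) (K (n + 1))

/-- `Kseg K m n = K_{m,n} = K_{m+1} K_{m+2} ⋯ K_n` (identity if `n ≤ m`). -/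
def Kseg (K : ℕ → V → V → ℝ) (m : ℕ) : ℕ → V → V → ℝ
  | 0 => idK
  | n + 1 => if n + 1 ≤ m then idK else mulKK (Kseg K m n) (K (n + 1))

/-- `‖f‖_{ℓ^p(ν)} = (∑ₓ |f(x)|^p ν(x))^{1/p}` for a real exponent `p`. -/
def lpNorm (ν : V → ℝ) (p : ℝ) (f : V → ℝ) : ℝ :=
  (∑ x, |f x| ^ p * ν x) ^ (1 / p)

/-- `‖f‖_{ℓ^∞} = maxₓ |f(x)|`. -/
def linftyNorm (f : V → ℝ) : ℝ := ⨆ x, |f x|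

/-- Operator "norm" of `A` with respect to an input norm and an output norm. -/
def opNorm (nIn nOut : (V → ℝ) → ℝ) (A : (V → ℝ) → V → ℝ) : ℝ :=
  sSup {r : ℝ | ∃ f : V → ℝ, nIn f ≤ 1 ∧ r = nOut (A f)}

/-- The second largest singular value of `K : ℓ²(νin) → ℓ²(νout)`,
i.e. the norm of `K - νin : ℓ²(νin) → ℓ²(νout)` where the measure `νin`
is identified with the operator `f ↦ νin(f)𝟙`. -/
def sigma1 (Kk : V → V → ℝ) (νin νout : V → ℝ) : ℝ :=
  opNorm (lpNorm νin 2) (lpNorm νout 2)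
    (fun f x => mulKF Kk f x - ∑ z, νin z * f z)

/-- Dirichlet form of a kernel `P` reversible with respect to `ν`. -/
def dirichlet (P : V → V → ℝ) (ν : V → ℝ) (f : V → ℝ) : ℝ :=
  (1 / 2) * ∑ x, ∑ y, (f x - f y) ^ 2 * (ν x * P x y)

/-- The kernel of `K*K` where `K : ℓ²(μcur) → ℓ²(μprev)`,
`P(x,y) = (1/μcur(x)) ∑_z μprev(z) K(z,x) K(z,y)`. -/
def Pker (Kk : V → V → ℝ) (μprev μcur : V → ℝ) : V → V → ℝ :=
  fun x y => (1 / μcur x) * ∑ z, μprev z * Kk z x * Kk z y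

/-- The kernel of the adjoint `K*` of `K : ℓ²(μcur) → ℓ²(μprev)`,
`K*(x,y) = K(y,x) μprev(y) / μcur(x)`. -/
def adjK (Kk : V → V → ℝ) (μprev μcur : V → ℝ) : V → V → ℝ :=
  fun x y => Kk y x * μprev y / μcur x

/-- The `ℓ²(ν)` relative entropy `L(f²,ν)`. -/
def entL (ν : V → ℝ) (f : V → ℝ) : ℝ :=
  ∑ x, f x ^ 2 * Real.log (f x ^ 2 / ∑ y, f y ^ 2 * ν y) * ν x

/-- The logarithmic Sobolev constant of a kernel `P` with respect to `ν`. -/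
def lsConst (P : V → V → ℝ) (ν : V → ℝ) : ℝ :=
  sInf {r : ℝ | ∃ f : V → ℝ, entL ν f ≠ 0 ∧ r = dirichlet P ν f / entL ν f}

/-- Chi-square type distance `d₂(κ,ν)`. -/
def d2 (κ ν : V → ℝ) : ℝ :=
  (∑ y, |κ y / ν y - 1| ^ 2 * ν y) ^ ((1 : ℝ) / 2)

/-- `c`-stability of a sequence of kernels with respect to `μ0`. -/
def cStable (c : ℝ) (μ0 : V → ℝ) (K : ℕ → V → V → ℝ) : Prop :=
  ∀ n x, c⁻¹ ≤ muSeq μ0 K n x / μ0 x ∧ muSeq μ0 K n x / μ0 x ≤ c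

/-- Powers of a kernel. -/
def kpow (Kk : V → V → ℝ) : ℕ → V → V → ℝ
  | 0 => idK
  | n + 1 => mulKK (kpow Kk n) Kk

/-- Irreducibility of a Markov kernel. -/
def IsIrreducible (Kk : V → V → ℝ) : Prop :=
  ∀ x y, ∃ n, 0 < kpow Kk n x y

/-- Aperiodicity of a Markov kernel. -/
def IsAperiodic (Kk : V → V → ℝ) : Prop :=
  ∀ x, ∃ N0 : ℕ, ∀ n, N0 ≤ n → 0 < kpow Kk n x x



section Aux

lemma lpNorm_two (ν f : V → ℝ) :
    lpNorm ν 2 f = Real.sqrt (∑ x, (f x) ^ 2 * ν x) := by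
  rw [lpNorm, Real.sqrt_eq_rpow]
  congr 1
  refine Finset.sum_congr rfl fun x _ => ?_
  rw [show ((2 : ℝ)) = ((2 : ℕ) : ℝ) by norm_num, Real.rpow_natCast, sq_abs]

lemma lpNorm_two_nonneg (ν f : V → ℝ) : 0 ≤ lpNorm ν 2 f := by
  rw [lpNorm_two]; exact Real.sqrt_nonneg _

lemma lpNorm_two_smul (ν g : V → ℝ) (c : ℝ) (hc : 0 ≤ c) :
    lpNorm ν 2 (fun x => c * g x) = c * lpNorm ν 2 g := by
  rw [lpNorm_two, lpNorm_two]
  have h : ∑ x, (c * g x) ^ 2 * ν x = c ^ 2 * ∑ x, (g x) ^ 2 * ν x := by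
    rw [Finset.mul_sum]; exact Finset.sum_congr rfl fun x _ => by ring
  rw [h, Real.sqrt_mul (sq_nonneg c), Real.sqrt_sq hc]

lemma abs_le_of_lpNorm_le_one (ν f : V → ℝ) (hν : ∀ x, 0 < ν x)
    (h : lpNorm ν 2 f ≤ 1) (y : V) : |f y| ≤ (Real.sqrt (ν y))⁻¹ := by
  rw [lpNorm_two] at h
  have hs0 : 0 ≤ ∑ x, (f x) ^ 2 * ν x :=
    Finset.sum_nonneg fun x _ => mul_nonneg (sq_nonneg _) (hν x).le
  have hs1 : ∑ x, (f x) ^ 2 * ν x ≤ 1 := by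
    nlinarith [Real.sq_sqrt hs0, Real.sqrt_nonneg (∑ x, (f x) ^ 2 * ν x)]
  have hy : (f y) ^ 2 * ν y ≤ 1 := le_trans
    (Finset.single_le_sum (f := fun x => (f x) ^ 2 * ν x)
      (fun x _ => mul_nonneg (sq_nonneg _) (hν x).le) (Finset.mem_univ y)) hs1
  have : (f y) ^ 2 ≤ (ν y)⁻¹ := by
    rw [← one_div]; exact (le_div_iff₀ (hν y)).mpr hy
  calc |f y| ≤ Real.sqrt ((ν y)⁻¹) := Real.abs_le_sqrt this
    _ = (Real.sqrt (ν y))⁻¹ := Real.sqrt_inv _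

lemma bddAbove_opSet (M : V → V → ℝ) (ν μ : V → ℝ)
    (hν : ∀ x, 0 < ν x) (hμ : ∀ x, 0 ≤ μ x) :
    BddAbove {r : ℝ | ∃ f : V → ℝ, lpNorm ν 2 f ≤ 1 ∧ r = lpNorm μ 2 (mulKF M f)} := by
  refine ⟨Real.sqrt (∑ x, (∑ y, |M x y| * (Real.sqrt (ν y))⁻¹) ^ 2 * μ x), ?_⟩
  rintro r ⟨f, hf, rfl⟩
  rw [lpNorm_two]
  apply Real.sqrt_le_sqrt
  apply Finset.sum_le_sum
  intro x _
  apply mul_le_mul_of_nonneg_right _ (hμ x)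
  have habs : |mulKF M f x| ≤ ∑ y, |M x y| * (Real.sqrt (ν y))⁻¹ := by
    calc |mulKF M f x| ≤ ∑ y, |M x y * f y| := Finset.abs_sum_le_sum_abs _ _
      _ ≤ ∑ y, |M x y| * (Real.sqrt (ν y))⁻¹ := by
        apply Finset.sum_le_sum; intro y _
        rw [abs_mul]
        exact mul_le_mul_of_nonneg_left (abs_le_of_lpNorm_le_one ν f hν hf y)
          (abs_nonneg _)
  calc (mulKF M f x) ^ 2 = |mulKF M f x| ^ 2 := (sq_abs _).symm
    _ ≤ (∑ y, |M x y| * (Real.sqrt (ν y))⁻¹) ^ 2 :=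
        pow_le_pow_left₀ (abs_nonneg _) habs 2

lemma lpNorm_mulKF_le (M : V → V → ℝ) (ν μ : V → ℝ)
    (hν : ∀ x, 0 < ν x) (hμ : ∀ x, 0 ≤ μ x) (g : V → ℝ) :
    lpNorm μ 2 (mulKF M g) ≤
      opNorm (lpNorm ν 2) (lpNorm μ 2) (fun f => mulKF M f) * lpNorm ν 2 g := by
  rcases eq_or_lt_of_le (lpNorm_two_nonneg ν g) with h0 | hs
  · -- norm of g is zero, hence g = 0
    have hsum : ∑ x, (g x) ^ 2 * ν x = 0 := by
      have h0' : Real.sqrt (∑ x, (g x) ^ 2 * ν x) = 0 := by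
        rw [← lpNorm_two]; exact h0.symm
      have hs0 : 0 ≤ ∑ x, (g x) ^ 2 * ν x :=
        Finset.sum_nonneg fun x _ => mul_nonneg (sq_nonneg _) (hν x).le
      nlinarith [Real.sq_sqrt hs0]
    have hg : ∀ x, g x = 0 := by
      intro x
      have := (Finset.sum_eq_zero_iff_of_nonneg
        (fun x _ => mul_nonneg (sq_nonneg _) (hν x).le)).mp hsum x (Finset.mem_univ x)
      have := mul_eq_zero.mp this
      rcases this with h | h
      · exact pow_eq_zero_iff (by norm_num) |>.mp h
      · exact absurd h (hν x).ne'
    have : mulKF M g = fun _ => (0 : ℝ) := by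
      funext x; unfold mulKF; simp [hg]
    rw [this, ← h0, mul_zero, lpNorm_two]
    simp
  · set s := lpNorm ν 2 g with hsdef
    have hf1 : lpNorm ν 2 (fun x => s⁻¹ * g x) = 1 := by
      rw [lpNorm_two_smul ν g s⁻¹ (inv_nonneg.mpr hs.le), ← hsdef,
        inv_mul_cancel₀ hs.ne']
    have hmem : lpNorm μ 2 (mulKF M (fun x => s⁻¹ * g x)) ∈
        {r : ℝ | ∃ f : V → ℝ, lpNorm ν 2 f ≤ 1 ∧ r = lpNorm μ 2 (mulKF M f)} :=
      ⟨_, le_of_eq hf1, rfl⟩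
    have hle := le_csSup (bddAbove_opSet M ν μ hν hμ) hmem
    have heq : mulKF M (fun x => s⁻¹ * g x) = fun x => s⁻¹ * mulKF M g x := by
      funext x; unfold mulKF; rw [Finset.mul_sum]
      exact Finset.sum_congr rfl fun y _ => by ring
    rw [heq, lpNorm_two_smul μ (mulKF M g) s⁻¹ (inv_nonneg.mpr hs.le)] at hle
    unfold opNorm
    nlinarith [mul_inv_cancel₀ hs.ne', lpNorm_two_nonneg μ (mulKF M g)]

lemma sigma1_nonneg (Kk : V → V → ℝ) (νin νout : V → ℝ) :
    0 ≤ sigma1 Kk νin νout := by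
  apply Real.sSup_nonneg
  rintro r ⟨f, -, rfl⟩
  exact lpNorm_two_nonneg _ _

lemma op_eq (Kk : V → V → ℝ) (ν : V → ℝ) :
    (fun (f : V → ℝ) (x : V) => mulKF Kk f x - ∑ z, ν z * f z)
      = fun f => mulKF (fun x y => Kk x y - ν y) f := by
  funext f x
  unfold mulKF
  simp only [sub_mul, Finset.sum_sub_distrib]

lemma mulKF_mulKK (A B : V → V → ℝ) (f : V → ℝ) :
    mulKF (mulKK A B) f = mulKF A (mulKF B f) := by
  funext x
  unfold mulKF mulKK
  simp only [Finset.sum_mul, Finset.mul_sum]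
  rw [Finset.sum_comm]
  exact Finset.sum_congr rfl fun z _ => Finset.sum_congr rfl fun y _ => by ring

lemma muSeq_sum (μ0 : V → ℝ) (K : ℕ → V → V → ℝ)
    (hK : ∀ i, 1 ≤ i → IsKernel (K i)) (hμ01 : ∑ x, μ0 x = 1) (n : ℕ) :
    ∑ x, muSeq μ0 K n x = 1 := by
  induction n with
  | zero => exact hμ01
  | succ n ih =>
    show ∑ y, mulMK (muSeq μ0 K n) (K (n + 1)) y = 1
    unfold mulMK
    rw [Finset.sum_comm]
    calc ∑ x, ∑ y, muSeq μ0 K n x * K (n + 1) x y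
        = ∑ x, muSeq μ0 K n x * ∑ y, K (n + 1) x y := by
          exact Finset.sum_congr rfl fun x _ => (Finset.mul_sum _ _ _).symm
      _ = 1 := by
          simp only [(hK (n + 1) (by omega)).2, mul_one]; exact ih

lemma Kseg_sum (K : ℕ → V → V → ℝ) (hK : ∀ i, 1 ≤ i → IsKernel (K i))
    (n : ℕ) (x : V) : ∑ y, Kseg K 0 n x y = 1 := by
  induction n with
  | zero => simp [Kseg, idK]
  | succ n ih =>
    have hstep : Kseg K 0 (n + 1) = mulKK (Kseg K 0 n) (K (n + 1)) := by
      simp [Kseg, Nat.not_succ_le_zero]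
    rw [hstep]
    unfold mulKK
    rw [Finset.sum_comm]
    calc ∑ z, ∑ y, Kseg K 0 n x z * K (n + 1) z y
        = ∑ z, Kseg K 0 n x z * ∑ y, K (n + 1) z y := by
          exact Finset.sum_congr rfl fun z _ => (Finset.mul_sum _ _ _).symm
      _ = 1 := by
          simp only [(hK (n + 1) (by omega)).2, mul_one]; exact ih

lemma Dfact (K : ℕ → V → V → ℝ) (μ0 : V → ℝ)
    (hK : ∀ i, 1 ≤ i → IsKernel (K i)) (hμ01 : ∑ x, μ0 x = 1) (n : ℕ) :
    (fun x y => Kseg K 0 (n + 1) x y - muSeq μ0 K (n + 1) y) =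
      mulKK (fun x y => Kseg K 0 n x y - muSeq μ0 K n y)
        (fun x y => K (n + 1) x y - muSeq μ0 K (n + 1) y) := by
  funext x y
  unfold mulKK
  have h1 : ∑ z, Kseg K 0 n x z = 1 := Kseg_sum K hK n x
  have h2 : ∑ z, muSeq μ0 K n z = 1 := muSeq_sum μ0 K hK hμ01 n
  have h3 : ∑ z, muSeq μ0 K n z * K (n + 1) z y = muSeq μ0 K (n + 1) y := rfl
  have h4 : Kseg K 0 (n + 1) x y = ∑ z, Kseg K 0 n x z * K (n + 1) z y := by
    have : Kseg K 0 (n + 1) = mulKK (Kseg K 0 n) (K (n + 1)) := by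
      simp [Kseg, Nat.not_succ_le_zero]
    rw [this]; rfl
  have hexp : ∑ z, (Kseg K 0 n x z - muSeq μ0 K n z) *
      (K (n + 1) z y - muSeq μ0 K (n + 1) y)
      = (∑ z, Kseg K 0 n x z * K (n + 1) z y)
        - muSeq μ0 K (n + 1) y * (∑ z, Kseg K 0 n x z)
        - (∑ z, muSeq μ0 K n z * K (n + 1) z y)
        + (∑ z, muSeq μ0 K n z) * muSeq μ0 K (n + 1) y := by
    rw [Finset.mul_sum, Finset.sum_mul, ← Finset.sum_sub_distrib,
      ← Finset.sum_sub_distrib, ← Finset.sum_add_distrib]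
    exact Finset.sum_congr rfl fun z _ => by ring
  rw [hexp, h1, h2, h3, h4]
  ring

lemma main_claim (K : ℕ → V → V → ℝ) (μ0 : V → ℝ)
    (hK : ∀ i, 1 ≤ i → IsKernel (K i)) (hμ01 : ∑ x, μ0 x = 1)
    (hpos : ∀ n x, 0 < muSeq μ0 K n x) (n : ℕ) (f : V → ℝ) :
    lpNorm μ0 2 (mulKF (fun x y => Kseg K 0 n x y - muSeq μ0 K n y) f)
      ≤ (∏ i ∈ Finset.Icc 1 n, sigma1 (K i) (muSeq μ0 K i) (muSeq μ0 K (i - 1)))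
        * lpNorm (muSeq μ0 K n) 2 f := by
  induction n generalizing f with
  | zero =>
    rw [show Finset.Icc 1 0 = (∅ : Finset ℕ) from Finset.Icc_eq_empty (by omega),
      Finset.prod_empty, one_mul]
    show lpNorm μ0 2 _ ≤ lpNorm μ0 2 f
    set m : ℝ := ∑ z, μ0 z * f z with hm
    have hact : mulKF (fun x y => Kseg K 0 0 x y - muSeq μ0 K 0 y) f
        = fun x => f x - m := by
      funext x
      unfold mulKF
      show ∑ y, (idK x y - μ0 y) * f y = f x - m
      simp only [sub_mul, Finset.sum_sub_distrib, idK, ite_mul, one_mul, zero_mul,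
        Finset.sum_ite_eq, Finset.mem_univ, if_true]
      rw [hm]
    rw [hact, lpNorm_two, lpNorm_two]
    apply Real.sqrt_le_sqrt
    have key : ∑ x, (f x - m) ^ 2 * μ0 x = (∑ x, (f x) ^ 2 * μ0 x) - m ^ 2 := by
      have hterm : ∀ x ∈ Finset.univ, (f x - m) ^ 2 * μ0 x =
          (f x) ^ 2 * μ0 x - 2 * m * (μ0 x * f x) + m ^ 2 * μ0 x :=
        fun x _ => by ring
      rw [Finset.sum_congr rfl hterm, Finset.sum_add_distrib,
        Finset.sum_sub_distrib, ← Finset.mul_sum, ← Finset.mul_sum, hμ01, ← hm]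
      ring
    rw [key]
    nlinarith [sq_nonneg m]
  | succ n ih =>
    rw [Dfact K μ0 hK hμ01 n, mulKF_mulKK]
    have hE := lpNorm_mulKF_le (fun x y => K (n + 1) x y - muSeq μ0 K (n + 1) y)
      (muSeq μ0 K (n + 1)) (muSeq μ0 K n) (hpos (n + 1)) (fun x => (hpos n x).le) f
    have hσ : sigma1 (K (n + 1)) (muSeq μ0 K (n + 1)) (muSeq μ0 K n)
        = opNorm (lpNorm (muSeq μ0 K (n + 1)) 2) (lpNorm (muSeq μ0 K n) 2)
          (fun f => mulKF (fun x y => K (n + 1) x y - muSeq μ0 K (n + 1) y) f) := by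
      unfold sigma1
      rw [op_eq]
    have hPnn : 0 ≤ ∏ i ∈ Finset.Icc 1 n,
        sigma1 (K i) (muSeq μ0 K i) (muSeq μ0 K (i - 1)) :=
      Finset.prod_nonneg fun i _ => sigma1_nonneg _ _ _
    have hprod : ∏ i ∈ Finset.Icc 1 (n + 1),
        sigma1 (K i) (muSeq μ0 K i) (muSeq μ0 K (i - 1))
        = (∏ i ∈ Finset.Icc 1 n, sigma1 (K i) (muSeq μ0 K i) (muSeq μ0 K (i - 1)))
          * sigma1 (K (n + 1)) (muSeq μ0 K (n + 1)) (muSeq μ0 K n) := by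
      rw [Finset.prod_Icc_succ_top (by omega : 1 ≤ n + 1)]
      simp
    calc lpNorm μ0 2 (mulKF (fun x y => Kseg K 0 n x y - muSeq μ0 K n y)
          (mulKF (fun x y => K (n + 1) x y - muSeq μ0 K (n + 1) y) f))
        ≤ (∏ i ∈ Finset.Icc 1 n, sigma1 (K i) (muSeq μ0 K i) (muSeq μ0 K (i - 1)))
          * lpNorm (muSeq μ0 K n) 2
            (mulKF (fun x y => K (n + 1) x y - muSeq μ0 K (n + 1) y) f) := ih _
      _ ≤ (∏ i ∈ Finset.Icc 1 n, sigma1 (K i) (muSeq μ0 K i) (muSeq μ0 K (i - 1)))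
          * (sigma1 (K (n + 1)) (muSeq μ0 K (n + 1)) (muSeq μ0 K n)
            * lpNorm (muSeq μ0 K (n + 1)) 2 f) := by
          apply mul_le_mul_of_nonneg_left _ hPnn
          rw [hσ]; exact hE
      _ = (∏ i ∈ Finset.Icc 1 (n + 1),
            sigma1 (K i) (muSeq μ0 K i) (muSeq μ0 K (i - 1)))
          * lpNorm (muSeq μ0 K (n + 1)) 2 f := by
          rw [hprod]; ring

end Aux

/-- the `ℓ²(μ_n) → ℓ²(μ_0)` norm of `K_{0,n} - μ_n` is bounded by the
product of the second largest singular values `σ₁(K_i, μ_{i-1})`. -/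
theorem stmt2 {V : Type*} [Fintype V] [DecidableEq V]
    (K : ℕ → V → V → ℝ) (μ0 : V → ℝ)
    (hK : ∀ i, 1 ≤ i → IsKernel (K i))
    (hμ0pos : ∀ x, 0 < μ0 x) (hμ01 : ∑ x, μ0 x = 1)
    (hpos : ∀ n x, 0 < muSeq μ0 K n x)
    (n : ℕ) (hn : 1 ≤ n) :
    opNorm (lpNorm (muSeq μ0 K n) 2) (lpNorm μ0 2)
        (fun f x => mulKF (Kseg K 0 n) f x - ∑ z, muSeq μ0 K n z * f z)
      ≤ ∏ i ∈ Finset.Icc 1 n, sigma1 (K i) (muSeq μ0 K i) (muSeq μ0 K (i - 1)) := by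
  have hPnn : 0 ≤ ∏ i ∈ Finset.Icc 1 n,
      sigma1 (K i) (muSeq μ0 K i) (muSeq μ0 K (i - 1)) :=
    Finset.prod_nonneg fun i _ => sigma1_nonneg _ _ _
  apply Real.sSup_le _ hPnn
  rintro r ⟨f, hf, rfl⟩
  have heq : (fun x => mulKF (Kseg K 0 n) f x - ∑ z, muSeq μ0 K n z * f z)
      = mulKF (fun x y => Kseg K 0 n x y - muSeq μ0 K n y) f :=
    congrFun (op_eq (Kseg K 0 n) (muSeq μ0 K n)) f
  beta_reduce
  rw [heq]
  calc lpNorm μ0 2 (mulKF (fun x y => Kseg K 0 n x y - muSeq μ0 K n y) f)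
      ≤ (∏ i ∈ Finset.Icc 1 n, sigma1 (K i) (muSeq μ0 K i) (muSeq μ0 K (i - 1)))
        * lpNorm (muSeq μ0 K n) 2 f := main_claim K μ0 hK hμ01 hpos n f
    _ ≤ _ := mul_le_of_le_one_right hPnn hf

end TimeInhomog
end
end

section
/- Fix ε ∈ (0,1/2). For any μ_0 ∈ 𝒮_N(ε) and any sequence (K_i)_{i≥1} with K_i ∈ 𝒬(ε) for all i, setting μ_n = μ_0K_1⋯K_n, one has (1−2ε)/(1+2ε) ≤ μ_n(x)/μ_0(x) ≤ (1+2ε)/(1−2ε) for all n ≥ 0 and x ∈ V_N; that is, the family 𝒬(ε) is (1+2ε)/(1−2ε)-stable with respect to any μ_0 ∈ 𝒮_N(ε). -/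
open Finset

noncomputable section

namespace TimeInhomog

variable {V : Type*} [Fintype V] [DecidableEq V]

/-- The simple random walk kernel on the circle `ℤ/pℤ`. -/
def circleQ (p : ℕ) : ZMod p → ZMod p → ℝ :=
  fun x y => (if y = x + 1 then (1 : ℝ) / 2 else 0) + (if y = x - 1 then (1 : ℝ) / 2 else 0)

/-- The asymmetric perturbation at the vertex `0`: `Δ_δ(0,1) = δ`, `Δ_δ(0,-1) = -δ`. -/
def circleDelta (p : ℕ) (δ : ℝ) : ZMod p → ZMod p → ℝ :=
  fun x y => (if x = 0 ∧ y = 1 then δ else 0) + (if x = 0 ∧ y = -1 then -δ else 0)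

/-- The perturbed kernel `Q_δ = Q + Δ_δ`. -/
def circleQd (p : ℕ) (δ : ℝ) : ZMod p → ZMod p → ℝ :=
  fun x y => circleQ p x y + circleDelta p δ x y

/-- The class `𝒮_N(ε)` of probability measures on `ℤ/pℤ`: writing
`μ(x) = 1/p + a_{μ,x}`, one has `a_{μ,x} = -a_{μ,-x}` (equivalently
`μ(x) + μ(-x) = 2/p`) and `|a_{μ,x}| ≤ 2ε/p`. -/
def memS (p : ℕ) [NeZero p] (ε : ℝ) (μ : ZMod p → ℝ) : Prop :=
  (∀ x, 0 ≤ μ x) ∧ (∑ x, μ x = 1) ∧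
  (∀ x : ZMod p, μ x + μ (-x) = 2 / (p : ℝ)) ∧
  (∀ x : ZMod p, |μ x - 1 / (p : ℝ)| ≤ 2 * ε / (p : ℝ))

lemma sum_ite_shift (p : ℕ) [NeZero p] (f : ZMod p → ℝ) (c y : ZMod p) :
    ∑ x, (if y = x + c then f x else 0) = f (y - c) := by
  rw [Finset.sum_eq_single (y - c)]
  · simp
  · intro b _ hb; rw [if_neg]; intro h; apply hb; rw [h]; ring
  · intro h; exact absurd (Finset.mem_univ _) h

lemma mulMK_circleQd (p : ℕ) [NeZero p] (δ : ℝ) (μ : ZMod p → ℝ) (y : ZMod p) :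
    mulMK μ (circleQd p δ) y =
      μ (y - 1) / 2 + μ (y + 1) / 2
        + (if y = 1 then δ * μ 0 else 0) + (if y = -1 then -(δ * μ 0) else 0) := by
  unfold mulMK circleQd circleQ circleDelta
  simp only [mul_add, Finset.sum_add_distrib, mul_ite, mul_zero, mul_neg]
  have e1 : ∑ x : ZMod p, (if y = x + 1 then μ x * (1/2) else 0) = μ (y-1) * (1/2) :=
    sum_ite_shift p (fun x => μ x * (1/2)) 1 y
  have e2 : ∑ x : ZMod p, (if y = x - 1 then μ x * (1/2) else 0) = μ (y+1) * (1/2) := by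
    have := sum_ite_shift p (fun x => μ x * (1/2)) (-1) y
    simp only [sub_neg_eq_add] at this
    rw [← this]
    apply Finset.sum_congr rfl; intro x _
    rw [sub_eq_add_neg]
  have e3 : ∑ x : ZMod p, (if x = 0 ∧ y = 1 then μ x * δ else 0)
      = if y = 1 then δ * μ 0 else 0 := by
    by_cases hy : y = 1 <;> simp [hy, Finset.sum_ite_eq', mul_comm]
  have e4 : ∑ x : ZMod p, (if x = 0 ∧ y = -1 then -(μ x * δ) else 0)
      = if y = -1 then -(δ * μ 0) else 0 := by
    by_cases hy : y = -1 <;> simp [hy, Finset.sum_ite_eq', mul_comm]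
  rw [e1, e2, e3, e4]; ring

lemma circleQd_rowsum (p : ℕ) [NeZero p] (δ : ℝ) (x : ZMod p) :
    ∑ y, circleQd p δ x y = 1 := by
  unfold circleQd circleQ circleDelta
  simp only [Finset.sum_add_distrib]
  have e1 : ∑ y : ZMod p, (if y = x + 1 then (1:ℝ)/2 else 0) = 1/2 := by
    simp [Finset.sum_ite_eq']
  have e2 : ∑ y : ZMod p, (if y = x - 1 then (1:ℝ)/2 else 0) = 1/2 := by
    simp [Finset.sum_ite_eq']
  have e3 : ∑ y : ZMod p, (if x = 0 ∧ y = 1 then δ else 0) = if x = 0 then δ else 0 := by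
    by_cases hx : x = 0 <;> simp [hx, Finset.sum_ite_eq']
  have e4 : ∑ y : ZMod p, (if x = 0 ∧ y = -1 then -δ else 0) = if x = 0 then -δ else 0 := by
    by_cases hx : x = 0 <;> simp [hx, Finset.sum_ite_eq']
  rw [e1, e2, e3, e4]
  split_ifs <;> ring
set_option maxHeartbeats 800000 in
lemma memS_step (p : ℕ) [NeZero p] (ε : ℝ) (hε : ε < 1/2) (δ : ℝ) (hδ : |δ| ≤ ε)
    (μ : ZMod p → ℝ) (hμ : memS p ε μ) : memS p ε (mulMK μ (circleQd p δ)) := by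
  obtain ⟨hpos, hsum, hsym, hbd⟩ := hμ
  have hp : (0:ℝ) < p := by exact_mod_cast Nat.pos_of_ne_zero (NeZero.ne p)
  have hε0 : 0 ≤ ε := le_trans (abs_nonneg δ) hδ
  have r1 : (2:ℝ)/p = 2*(1/p) := by ring
  have r2 : 2*ε/(p:ℝ) = 2*(ε/p) := by ring
  have r3 : ε/(p:ℝ) = ε*(1/p) := by ring
  have hμ0 : μ 0 = 1 / p := by
    have h := hsym 0; simp only [neg_zero] at h; linarith [h, r1]
  have hδ' := abs_le.mp hδ
  have hip : 0 < 1 / (p:ℝ) := by positivity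
  have hεdiv : 0 ≤ ε / (p:ℝ) := div_nonneg hε0 hp.le
  have h2e : 2 * ε / (p:ℝ) ≤ 1 / p := by
    have h := mul_le_mul_of_nonneg_right (show 2*ε ≤ 1 by linarith) hip.le
    have r : 2*ε/(p:ℝ) = (2*ε)*(1/p) := by ring
    linarith [h, r]
  have hδμ : -(ε/p) ≤ δ * μ 0 ∧ δ * μ 0 ≤ ε/p := by
    rw [hμ0]
    have hl := mul_le_mul_of_nonneg_right hδ'.1 hip.le
    have hr := mul_le_mul_of_nonneg_right hδ'.2 hip.le
    constructor <;> linarith [hl, hr, r3, show -ε*(1/(p:ℝ)) = -(ε*(1/p)) by ring]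
  have hbd' : ∀ y, |mulMK μ (circleQd p δ) y - 1/(p:ℝ)| ≤ 2*ε/p := by
    intro y
    rw [mulMK_circleQd, abs_le]
    have h1 := abs_le.mp (hbd (y-1))
    have h2 := abs_le.mp (hbd (y+1))
    split_ifs with hy1 hy2 hy2
    · have e1 : μ (y - 1) = 1/p := by rw [hy1, sub_self, hμ0]
      have e2 : μ (y + 1) = 1/p := by rw [hy2, neg_add_cancel, hμ0]
      rw [e1, e2]
      constructor <;> linarith [r2, hεdiv]
    · have e1 : μ (y - 1) = 1/p := by rw [hy1, sub_self, hμ0]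
      rw [e1]
      constructor <;> linarith [h2.1, h2.2, hδμ.1, hδμ.2, r2]
    · have e2 : μ (y + 1) = 1/p := by rw [hy2, neg_add_cancel, hμ0]
      rw [e2]
      constructor <;> linarith [h1.1, h1.2, hδμ.1, hδμ.2, r2]
    · constructor <;> linarith [h1.1, h1.2, h2.1, h2.2, r2]
  refine ⟨?_, ?_, ?_, hbd'⟩
  · intro y
    have h := (abs_le.mp (hbd' y)).1
    linarith [h, h2e]
  · have key : ∀ x : ZMod p, ∑ y, μ x * circleQd p δ x y = μ x := by
      intro x; rw [← Finset.mul_sum, circleQd_rowsum, mul_one]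
    calc ∑ y, mulMK μ (circleQd p δ) y
        = ∑ x : ZMod p, ∑ y, μ x * circleQd p δ x y := Finset.sum_comm
      _ = ∑ x : ZMod p, μ x := Finset.sum_congr rfl (fun x _ => key x)
      _ = 1 := hsum
  · intro y
    rw [mulMK_circleQd, mulMK_circleQd]
    have h1 := hsym (y-1)
    have h2 := hsym (y+1)
    have e1 : -y - 1 = -(y+1) := by ring
    have e2 : -y + 1 = -(y-1) := by ring
    rw [e1, e2]
    have c1 : ((-y : ZMod p) = 1) ↔ (y = -1) := neg_eq_iff_eq_neg
    have c2 : ((-y : ZMod p) = -1) ↔ (y = 1) := neg_inj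
    simp only [c1, c2]
    split_ifs <;> linarith [h1, h2, r1]

/-- Claim 3.3 of the paper: the family `𝒬(ε)` is
`(1+2ε)/(1-2ε)`-stable with respect to any `μ_0 ∈ 𝒮_N(ε)`. -/
theorem stmt9 (N p : ℕ) [NeZero p] (hN : 1 ≤ N) (hp : p = 2 * N ∨ p = 2 * N + 1)
    (ε : ℝ) (hε0 : 0 < ε) (hε : ε < 1 / 2)
    (μ0 : ZMod p → ℝ) (hμ0 : memS p ε μ0)
    (δ : ℕ → ℝ) (hδ : ∀ i, |δ i| ≤ ε) :
    ∀ (n : ℕ) (x : ZMod p),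
      (1 - 2 * ε) / (1 + 2 * ε) ≤ muSeq μ0 (fun i => circleQd p (δ i)) n x / μ0 x ∧
      muSeq μ0 (fun i => circleQd p (δ i)) n x / μ0 x ≤ (1 + 2 * ε) / (1 - 2 * ε) := by
  have hpp : (0:ℝ) < p := by exact_mod_cast Nat.pos_of_ne_zero (NeZero.ne p)
  have key : ∀ n, memS p ε (muSeq μ0 (fun i => circleQd p (δ i)) n) := by
    intro n
    induction n with
    | zero => exact hμ0
    | succ n ih => exact memS_step p ε hε (δ (n+1)) (hδ (n+1)) _ ih
  intro n x
  obtain ⟨-, -, -, hb⟩ := key n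
  obtain ⟨-, -, -, hb0⟩ := hμ0
  set a := muSeq μ0 (fun i => circleQd p (δ i)) n x with ha_def
  set b := μ0 x with hb_def
  have ha := abs_le.mp (hb x)
  have h0 := abs_le.mp (hb0 x)
  have r2 : 2*ε/(p:ℝ) = 2*(ε/p) := by ring
  have hεdiv : 0 < ε / (p:ℝ) := by positivity
  have hip : 0 < 1/(p:ℝ) := by positivity
  -- bounds: (1-2ε)/p ≤ a,b ≤ (1+2ε)/p, expressed via p-multiplied forms
  have hal : 1 - 2*ε ≤ a * p := by
    have : 1/(p:ℝ) - 2*(ε/p) ≤ a := by linarith [ha.1, r2]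
    have := mul_le_mul_of_nonneg_right this hpp.le
    have e1 : ((1:ℝ)/p - 2*(ε/p)) * p = 1 - 2*ε := by field_simp
    linarith [this, e1]
  have hau : a * p ≤ 1 + 2*ε := by
    have h : a ≤ 1/(p:ℝ) + 2*(ε/p) := by linarith [ha.2, r2]
    have := mul_le_mul_of_nonneg_right h hpp.le
    have e1 : ((1:ℝ)/p + 2*(ε/p)) * p = 1 + 2*ε := by field_simp
    linarith [this, e1]
  have hbl : 1 - 2*ε ≤ b * p := by
    have : 1/(p:ℝ) - 2*(ε/p) ≤ b := by linarith [h0.1, r2]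
    have := mul_le_mul_of_nonneg_right this hpp.le
    have e1 : ((1:ℝ)/p - 2*(ε/p)) * p = 1 - 2*ε := by field_simp
    linarith [this, e1]
  have hbu : b * p ≤ 1 + 2*ε := by
    have h : b ≤ 1/(p:ℝ) + 2*(ε/p) := by linarith [h0.2, r2]
    have := mul_le_mul_of_nonneg_right h hpp.le
    have e1 : ((1:ℝ)/p + 2*(ε/p)) * p = 1 + 2*ε := by field_simp
    linarith [this, e1]
  have h1m : (0:ℝ) < 1 - 2*ε := by linarith
  have h1p : (0:ℝ) < 1 + 2*ε := by linarith
  have hbpos : 0 < b := by nlinarith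
  have hapos : 0 < a := by nlinarith
  constructor
  · rw [div_le_div_iff₀ h1p hbpos]
    nlinarith [hal, hbu, mul_pos h1m hpp]
  · rw [div_le_div_iff₀ hbpos h1m]
    nlinarith [hau, hbl, mul_pos h1m hpp]


end TimeInhomog
end
end

section
/- Let V be a finite set, K a Markov kernel on V, μ a positive probability measure with μ' = μK positive. Let K* be the adjoint of K : ℓ²(μ') → ℓ²(μ), let P = K*K (a Markov kernel reversible with respect to μ'), and let l(P) be the logarithmic Sobolev constant of P with respect to μ'. Then for all q_0 ≥ 2 and all q with q_0 ≤ q ≤ (1+l(P))·q_0, one has ‖K‖_{ℓ^{q_0}(μ')→ℓ^q(μ)} ≤ 1, i.e., ‖Kf‖_{ℓ^q(μ)} ≤ ‖f‖_{ℓ^{q_0}(μ')} for every f : V → ℝ. -/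
open Finset

noncomputable section

namespace TimeInhomog

variable {V : Type*} [Fintype V] [DecidableEq V]

section Aux

variable {V : Type*} [Fintype V] [DecidableEq V]

lemma mulMK_sum_one (μ : V → ℝ) (K : V → V → ℝ) (hK : IsKernel K) (hμ1 : ∑ x, μ x = 1) :
    ∑ y, mulMK μ K y = 1 := by
  unfold mulMK
  rw [Finset.sum_comm]
  simp_rw [← Finset.mul_sum, hK.2, mul_one]
  exact hμ1

lemma entL_nonneg (ν : V → ℝ) (hν : ∀ x, 0 < ν x) (hν1 : ∑ x, ν x = 1) (w : V → ℝ) :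
    0 ≤ entL ν w := by
  classical
  set M := ∑ y, w y ^ 2 * ν y with hMdef
  have hM0 : 0 ≤ M := Finset.sum_nonneg fun y _ => mul_nonneg (sq_nonneg _) (hν y).le
  rcases eq_or_lt_of_le hM0 with h0 | hMpos
  · have hw : ∀ x, w x = 0 := by
      intro x
      have hx := (Finset.sum_eq_zero_iff_of_nonneg
        (fun y _ => mul_nonneg (sq_nonneg (w y)) (hν y).le)).1 h0.symm x (Finset.mem_univ x)
      have hνx := hν x
      have h2 : w x ^ 2 = 0 := by
        by_contra h
        have h3 : 0 < w x ^ 2 := lt_of_le_of_ne (sq_nonneg _) (Ne.symm h)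
        nlinarith
      exact (pow_eq_zero_iff two_ne_zero).1 h2
    unfold entL
    rw [Finset.sum_eq_zero]
    intro x _
    rw [hw x]; ring
  · set s := Finset.univ.filter (fun x => w x ≠ 0) with hs
    have hsum_s : ∀ F : V → ℝ, (∀ x, w x = 0 → F x = 0) → ∑ x ∈ s, F x = ∑ x, F x := by
      intro F hF
      apply Finset.sum_filter_of_ne
      intro x _ hFx
      intro hwx
      exact hFx (hF x hwx)
    have hMs : ∑ x ∈ s, w x ^ 2 * ν x = M := hsum_s _ (fun x hx => by rw [hx]; ring)
    have hπ1 : ∑ x ∈ s, w x ^ 2 * ν x / M = 1 := by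
      rw [← Finset.sum_div, hMs, div_self (ne_of_gt hMpos)]
    have jensen := convexOn_exp.map_sum_le (t := s)
      (w := fun x => w x ^ 2 * ν x / M) (p := fun x => Real.log (M / w x ^ 2))
      (fun x _ => div_nonneg (mul_nonneg (sq_nonneg _) (hν x).le) hM0) hπ1
      (fun x _ => Set.mem_univ _)
    simp only [smul_eq_mul] at jensen
    have hrhs : ∑ x ∈ s, w x ^ 2 * ν x / M * Real.exp (Real.log (M / w x ^ 2)) = ∑ x ∈ s, ν x := by
      apply Finset.sum_congr rfl
      intro x hx
      have hwx : w x ≠ 0 := by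
        simp only [hs, Finset.mem_filter] at hx
        exact hx.2
      have hw2 : (0:ℝ) < w x ^ 2 := by positivity
      rw [Real.exp_log (div_pos hMpos hw2)]
      field_simp
    have hrhs1 : ∑ x ∈ s, ν x ≤ 1 := by
      rw [← hν1]
      exact Finset.sum_le_univ_sum_of_nonneg (fun x => (hν x).le)
    have hexp : Real.exp (∑ x ∈ s, w x ^ 2 * ν x / M * Real.log (M / w x ^ 2)) ≤ 1 := by
      calc Real.exp _ ≤ _ := jensen
        _ ≤ 1 := by rw [hrhs]; exact hrhs1
    have hle0 : ∑ x ∈ s, w x ^ 2 * ν x / M * Real.log (M / w x ^ 2) ≤ 0 :=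
      Real.exp_le_one_iff.1 hexp
    have hrel : ∑ x ∈ s, w x ^ 2 * ν x / M * Real.log (M / w x ^ 2)
        = -(1 / M) * entL ν w := by
      have hentL : entL ν w = ∑ x ∈ s, w x ^ 2 * Real.log (w x ^ 2 / M) * ν x := by
        unfold entL
        rw [← hMdef]
        exact (hsum_s _ (fun x hx => by rw [hx]; ring)).symm
      rw [hentL, Finset.mul_sum]
      apply Finset.sum_congr rfl
      intro x hx
      have hwx : w x ≠ 0 := by
        simp only [hs, Finset.mem_filter] at hx
        exact hx.2
      have hw2 : (0:ℝ) < w x ^ 2 := by positivity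
      have hlog : Real.log (M / w x ^ 2) = - Real.log (w x ^ 2 / M) := by
        rw [Real.log_div (ne_of_gt hMpos) (ne_of_gt hw2),
          Real.log_div (ne_of_gt hw2) (ne_of_gt hMpos)]
        ring
      rw [hlog]
      ring
    rw [hrel] at hle0
    have h2 : 0 ≤ 1 / M * entL ν w := by linarith
    have h3 := mul_nonneg hMpos.le h2
    rw [← mul_assoc, mul_one_div, div_self (ne_of_gt hMpos), one_mul] at h3
    exact h3

lemma Pker_nonneg (K : V → V → ℝ) (μ : V → ℝ) (hK : IsKernel K) (hμpos : ∀ x, 0 < μ x)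
    (hν : ∀ x, 0 < mulMK μ K x) (x y : V) : 0 ≤ Pker K μ (mulMK μ K) x y := by
  unfold Pker
  have h1 : (0:ℝ) ≤ 1 / mulMK μ K x := le_of_lt (div_pos one_pos (hν x))
  refine mul_nonneg h1 (Finset.sum_nonneg fun z _ => ?_)
  exact mul_nonneg (mul_nonneg (hμpos z).le (hK.1 z x)) (hK.1 z y)

lemma dirichlet_nonneg (K : V → V → ℝ) (μ : V → ℝ) (hK : IsKernel K) (hμpos : ∀ x, 0 < μ x)
    (hν : ∀ x, 0 < mulMK μ K x) (u : V → ℝ) :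
    0 ≤ dirichlet (Pker K μ (mulMK μ K)) (mulMK μ K) u := by
  unfold dirichlet
  have : (0:ℝ) ≤ ∑ x, ∑ y, (u x - u y) ^ 2 * (mulMK μ K x * Pker K μ (mulMK μ K) x y) := by
    refine Finset.sum_nonneg fun x _ => Finset.sum_nonneg fun y _ => ?_
    have h1 := Pker_nonneg K μ hK hμpos hν x y
    have h2 := (hν x).le
    positivity
  linarith

lemma nu_mul_Pker (K : V → V → ℝ) (μ : V → ℝ) (hν : ∀ x, 0 < mulMK μ K x) (x y : V) :
    mulMK μ K x * Pker K μ (mulMK μ K) x y = ∑ z, μ z * K z x * K z y := by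
  unfold Pker
  rw [← mul_assoc, mul_one_div, div_self (ne_of_gt (hν x)), one_mul]

lemma sum_swap3 (F : V → V → V → ℝ) :
    ∑ x, ∑ y, ∑ z, F x y z = ∑ z, ∑ x, ∑ y, F x y z := by
  have h : ∀ x : V, ∑ y, ∑ z, F x y z = ∑ z, ∑ y, F x y z := fun x => Finset.sum_comm
  simp_rw [h]
  exact Finset.sum_comm

lemma dirichlet_Pker_eq (K : V → V → ℝ) (μ : V → ℝ) (hK : IsKernel K)
    (hν : ∀ x, 0 < mulMK μ K x) (u : V → ℝ) :
    dirichlet (Pker K μ (mulMK μ K)) (mulMK μ K) u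
      = (∑ x, u x ^ 2 * mulMK μ K x) - ∑ z, mulKF K u z ^ 2 * μ z := by
  unfold dirichlet
  have h1 : ∀ x y : V, (u x - u y) ^ 2 * (mulMK μ K x * Pker K μ (mulMK μ K) x y)
      = ∑ z, μ z * ((u x - u y) ^ 2 * (K z x * K z y)) := by
    intro x y
    rw [nu_mul_Pker K μ hν, Finset.mul_sum]
    exact Finset.sum_congr rfl fun z _ => by ring
  simp_rw [h1]
  rw [sum_swap3 (fun x y z => μ z * ((u x - u y) ^ 2 * (K z x * K z y)))]
  have hz : ∀ z, ∑ x, ∑ y, μ z * ((u x - u y) ^ 2 * (K z x * K z y))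
      = μ z * ∑ x, ∑ y, (u x - u y) ^ 2 * (K z x * K z y) := by
    intro z
    rw [Finset.mul_sum]
    exact Finset.sum_congr rfl fun x _ => (Finset.mul_sum _ _ _).symm
  have h2 : ∀ z, ∑ x, ∑ y, (u x - u y) ^ 2 * (K z x * K z y)
      = 2 * (∑ x, K z x * u x ^ 2) - 2 * mulKF K u z ^ 2 := by
    intro z
    have hKz := hK.2 z
    have hx : ∀ x, ∑ y, (u x - u y) ^ 2 * (K z x * K z y)
        = K z x * u x ^ 2 * (∑ y, K z y) - 2 * (K z x * u x) * (∑ y, K z y * u y)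
          + K z x * (∑ y, K z y * u y ^ 2) := by
      intro x
      rw [Finset.mul_sum, Finset.mul_sum, Finset.mul_sum, ← Finset.sum_sub_distrib,
        ← Finset.sum_add_distrib]
      exact Finset.sum_congr rfl fun y _ => by ring
    simp_rw [hx, hKz, mul_one]
    rw [Finset.sum_add_distrib, Finset.sum_sub_distrib, ← Finset.sum_mul, ← Finset.sum_mul,
      ← Finset.mul_sum, hKz]
    unfold mulKF
    ring
  simp_rw [hz, h2]
  have hA : ∑ z, μ z * ∑ x, K z x * u x ^ 2 = ∑ x, u x ^ 2 * mulMK μ K x := by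
    unfold mulMK
    simp_rw [Finset.mul_sum]
    rw [Finset.sum_comm]
    exact Finset.sum_congr rfl fun x _ => Finset.sum_congr rfl fun z _ => by ring
  rw [← hA]
  have e3 : ∀ z, μ z * (2 * (∑ x, K z x * u x ^ 2) - 2 * mulKF K u z ^ 2)
      = 2 * (μ z * (∑ x, K z x * u x ^ 2) - mulKF K u z ^ 2 * μ z) := fun z => by ring
  simp_rw [e3, ← Finset.mul_sum, Finset.sum_sub_distrib]
  ring

lemma lsConst_mul_entL_le (K : V → V → ℝ) (μ : V → ℝ) (hK : IsKernel K)
    (hμpos : ∀ x, 0 < μ x) (hμ1 : ∑ x, μ x = 1) (hν : ∀ x, 0 < mulMK μ K x) (u : V → ℝ) :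
    lsConst (Pker K μ (mulMK μ K)) (mulMK μ K) * entL (mulMK μ K) u
      ≤ dirichlet (Pker K μ (mulMK μ K)) (mulMK μ K) u := by
  have hν1 : ∑ x, mulMK μ K x = 1 := mulMK_sum_one μ K hK hμ1
  by_cases hE : entL (mulMK μ K) u = 0
  · rw [hE, mul_zero]
    exact dirichlet_nonneg K μ hK hμpos hν u
  · have hEpos : 0 < entL (mulMK μ K) u :=
      lt_of_le_of_ne (entL_nonneg (mulMK μ K) hν hν1 u) (Ne.symm hE)
    have hbdd : BddBelow {r : ℝ | ∃ f : V → ℝ, entL (mulMK μ K) f ≠ 0 ∧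
        r = dirichlet (Pker K μ (mulMK μ K)) (mulMK μ K) f / entL (mulMK μ K) f} := by
      refine ⟨0, fun r hr => ?_⟩
      obtain ⟨f, hf, rfl⟩ := hr
      have hfpos : 0 < entL (mulMK μ K) f :=
        lt_of_le_of_ne (entL_nonneg (mulMK μ K) hν hν1 f) (Ne.symm hf)
      exact div_nonneg (dirichlet_nonneg K μ hK hμpos hν f) hfpos.le
    have hmem : dirichlet (Pker K μ (mulMK μ K)) (mulMK μ K) u / entL (mulMK μ K) u ∈
        {r : ℝ | ∃ f : V → ℝ, entL (mulMK μ K) f ≠ 0 ∧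
          r = dirichlet (Pker K μ (mulMK μ K)) (mulMK μ K) f / entL (mulMK μ K) f} :=
      ⟨u, hE, rfl⟩
    have hle : lsConst (Pker K μ (mulMK μ K)) (mulMK μ K)
        ≤ dirichlet (Pker K μ (mulMK μ K)) (mulMK μ K) u / entL (mulMK μ K) u :=
      csInf_le hbdd hmem
    have hfin := mul_le_mul_of_nonneg_right hle hEpos.le
    rwa [div_mul_cancel₀ _ (ne_of_gt hEpos)] at hfin

lemma jensen_entropy (ν : V → ℝ) (hν : ∀ x, 0 < ν x) (u : V → ℝ) (hu : ∀ x, 0 ≤ u x)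
    (p : ℝ) (hp0 : 0 < p) (hp2 : p ≤ 2)
    (hnorm : ∑ x, u x ^ 2 * ν x = 1) :
    1 - (2 / p - 1) * entL ν u ≤ (∑ x, u x ^ p * ν x) ^ (2 / p) := by
  classical
  set s := Finset.univ.filter (fun x => u x ≠ 0) with hs
  have hsum_s : ∀ F : V → ℝ, (∀ x, u x = 0 → F x = 0) → ∑ x ∈ s, F x = ∑ x, F x := by
    intro F hF
    apply Finset.sum_filter_of_ne
    intro x _ hFx hux
    exact hFx (hF x hux)
  have hL : entL ν u = ∑ x ∈ s, u x ^ 2 * Real.log (u x ^ 2) * ν x := by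
    unfold entL
    rw [hnorm]
    simp_rw [div_one]
    exact (hsum_s _ (fun x hx => by rw [hx]; ring)).symm
  have hπ1 : ∑ x ∈ s, u x ^ 2 * ν x = 1 := by
    rw [hsum_s _ (fun x hx => by rw [hx]; ring), hnorm]
  have hup : ∑ x, u x ^ p * ν x
      = ∑ x ∈ s, (u x ^ 2 * ν x) * Real.exp ((p - 2) * Real.log (u x)) := by
    rw [← hsum_s (fun x => u x ^ p * ν x)
      (fun x hx => by show u x ^ p * ν x = 0; rw [hx, Real.zero_rpow (ne_of_gt hp0)]; ring)]
    apply Finset.sum_congr rfl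
    intro x hx
    have hux : u x ≠ 0 := by
      simp only [hs, Finset.mem_filter] at hx
      exact hx.2
    have huxpos : 0 < u x := lt_of_le_of_ne (hu x) (Ne.symm hux)
    have he : Real.exp ((p - 2) * Real.log (u x)) = u x ^ (p - 2 : ℝ) := by
      rw [Real.rpow_def_of_pos huxpos, mul_comm]
    have h1 : u x ^ p = u x ^ (2:ℝ) * u x ^ (p - 2 : ℝ) := by
      rw [← Real.rpow_add huxpos]
      congr 1
      ring
    have h2 : u x ^ (2:ℝ) = u x ^ (2:ℕ) := Real.rpow_two (u x)
    rw [he, h1, h2]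
    ring
  have jensen := convexOn_exp.map_sum_le (t := s)
    (w := fun x => u x ^ 2 * ν x) (p := fun x => (p - 2) * Real.log (u x))
    (fun x _ => mul_nonneg (sq_nonneg _) (hν x).le) hπ1 (fun x _ => Set.mem_univ _)
  simp only [smul_eq_mul] at jensen
  have hsumt : ∑ x ∈ s, (u x ^ 2 * ν x) * ((p - 2) * Real.log (u x))
      = (p - 2) / 2 * entL ν u := by
    rw [hL, Finset.mul_sum]
    apply Finset.sum_congr rfl
    intro x hx
    rw [Real.log_pow]
    push_cast
    try ring
  have hkey : Real.exp ((p - 2) / 2 * entL ν u) ≤ ∑ x, u x ^ p * ν x := by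
    rw [hup, ← hsumt]
    exact jensen
  have h2p : (0:ℝ) ≤ 2 / p := by positivity
  have hpow := Real.rpow_le_rpow (Real.exp_pos _).le hkey h2p
  have hexp2 : (Real.exp ((p - 2) / 2 * entL ν u)) ^ ((2:ℝ) / p)
      = Real.exp (-(2 / p - 1) * entL ν u) := by
    rw [← Real.exp_mul]
    congr 1
    field_simp
    try ring
  rw [hexp2] at hpow
  have hfin : 1 - (2 / p - 1) * entL ν u ≤ Real.exp (-(2 / p - 1) * entL ν u) := by
    have := Real.add_one_le_exp (-(2 / p - 1) * entL ν u)
    linarith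
  linarith

lemma key_norm (K : V → V → ℝ) (μ : V → ℝ) (hK : IsKernel K) (hμpos : ∀ x, 0 < μ x)
    (hμ1 : ∑ x, μ x = 1) (hν : ∀ x, 0 < mulMK μ K x)
    (p : ℝ) (hp0 : 0 < p) (hp2 : p ≤ 2)
    (hpl : 2 / p - 1 ≤ lsConst (Pker K μ (mulMK μ K)) (mulMK μ K))
    (u : V → ℝ) (hu : ∀ x, 0 ≤ u x) (hnorm : ∑ x, u x ^ 2 * mulMK μ K x = 1) :
    ∑ z, mulKF K u z ^ 2 * μ z ≤ (∑ x, u x ^ p * mulMK μ K x) ^ ((2:ℝ) / p) := by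
  have hdir := dirichlet_Pker_eq K μ hK hν u
  rw [hnorm] at hdir
  have hls := lsConst_mul_entL_le K μ hK hμpos hμ1 hν u
  have hEnn := entL_nonneg (mulMK μ K) hν (mulMK_sum_one μ K hK hμ1) u
  have h1 : (2 / p - 1) * entL (mulMK μ K) u
      ≤ dirichlet (Pker K μ (mulMK μ K)) (mulMK μ K) u :=
    le_trans (mul_le_mul_of_nonneg_right hpl hEnn) hls
  have h2 := jensen_entropy (mulMK μ K) hν u hu p hp0 hp2 hnorm
  linarith

lemma key_gen (K : V → V → ℝ) (μ : V → ℝ) (hK : IsKernel K) (hμpos : ∀ x, 0 < μ x)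
    (hμ1 : ∑ x, μ x = 1) (hν : ∀ x, 0 < mulMK μ K x)
    (p : ℝ) (hp0 : 0 < p) (hp2 : p ≤ 2)
    (hpl : 2 / p - 1 ≤ lsConst (Pker K μ (mulMK μ K)) (mulMK μ K))
    (u : V → ℝ) (hu : ∀ x, 0 ≤ u x) :
    ∑ z, mulKF K u z ^ 2 * μ z ≤ (∑ x, u x ^ p * mulMK μ K x) ^ ((2:ℝ) / p) := by
  set M := ∑ x, u x ^ 2 * mulMK μ K x with hMdef
  have hM0 : 0 ≤ M := Finset.sum_nonneg fun x _ => mul_nonneg (sq_nonneg _) (hν x).le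
  rcases eq_or_lt_of_le hM0 with h0 | hMpos
  · have hu0 : ∀ x, u x = 0 := by
      intro x
      have hx := (Finset.sum_eq_zero_iff_of_nonneg
        (fun y _ => mul_nonneg (sq_nonneg (u y)) (hν y).le)).1 h0.symm x (Finset.mem_univ x)
      have hνx := hν x
      have h2 : u x ^ 2 = 0 := by
        by_contra h
        have h3 : 0 < u x ^ 2 := lt_of_le_of_ne (sq_nonneg _) (Ne.symm h)
        nlinarith
      exact (pow_eq_zero_iff two_ne_zero).1 h2
    have hKu : ∀ z, mulKF K u z = 0 := by
      intro z
      unfold mulKF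
      apply Finset.sum_eq_zero
      intro y _
      rw [hu0 y, mul_zero]
    rw [Finset.sum_eq_zero (fun z _ => by rw [hKu z]; ring)]
    apply Real.rpow_nonneg
    exact Finset.sum_nonneg fun x _ => mul_nonneg (Real.rpow_nonneg (hu x) p) (hν x).le
  · set c : ℝ := M ^ (-(1:ℝ)/2) with hc
    have hcpos : 0 < c := Real.rpow_pos_of_pos hMpos _
    have hc2 : c ^ 2 = M⁻¹ := by
      rw [hc, ← Real.rpow_natCast (M ^ (-(1:ℝ)/2)) 2, ← Real.rpow_mul hM0]
      norm_num
      exact Real.rpow_neg_one M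
    set v : V → ℝ := fun x => u x * c with hv
    have hvnn : ∀ x, 0 ≤ v x := fun x => mul_nonneg (hu x) hcpos.le
    have hvnorm : ∑ x, v x ^ 2 * mulMK μ K x = 1 := by
      have : ∀ x, v x ^ 2 * mulMK μ K x = c ^ 2 * (u x ^ 2 * mulMK μ K x) := by
        intro x
        show (u x * c) ^ 2 * mulMK μ K x = _
        ring
      simp_rw [this, ← Finset.mul_sum, ← hMdef, hc2]
      exact inv_mul_cancel₀ (ne_of_gt hMpos)
    have hknorm := key_norm K μ hK hμpos hμ1 hν p hp0 hp2 hpl v hvnn hvnorm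
    have hKv : ∀ z, mulKF K v z = mulKF K u z * c := by
      intro z
      unfold mulKF
      rw [Finset.sum_mul]
      exact Finset.sum_congr rfl fun y _ => by show K z y * (u y * c) = _; ring
    have hLHS : ∑ z, mulKF K v z ^ 2 * μ z = c ^ 2 * ∑ z, mulKF K u z ^ 2 * μ z := by
      rw [Finset.mul_sum]
      exact Finset.sum_congr rfl fun z _ => by rw [hKv z]; ring
    have hvp : ∀ x, v x ^ p = u x ^ p * c ^ p := fun x => Real.mul_rpow (hu x) hcpos.le
    have hRHS : (∑ x, v x ^ p * mulMK μ K x) ^ ((2:ℝ) / p)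
        = c ^ 2 * (∑ x, u x ^ p * mulMK μ K x) ^ ((2:ℝ) / p) := by
      have hsum : ∑ x, v x ^ p * mulMK μ K x = c ^ p * ∑ x, u x ^ p * mulMK μ K x := by
        rw [Finset.mul_sum]
        exact Finset.sum_congr rfl fun x _ => by rw [hvp x]; ring
      rw [hsum, Real.mul_rpow (Real.rpow_nonneg hcpos.le _)
        (Finset.sum_nonneg fun x _ => mul_nonneg (Real.rpow_nonneg (hu x) p) (hν x).le)]
      congr 1
      rw [← Real.rpow_natCast c 2, ← Real.rpow_mul hcpos.le]
      congr 1
      field_simp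
      norm_num
    rw [hLHS, hRHS] at hknorm
    exact le_of_mul_le_mul_left hknorm (by positivity : (0:ℝ) < c ^ 2)

end Aux

/-- Proposition 4.1 of the paper, hypercontractivity: if `l(P)` is
the log-Sobolev constant of `P = K*K` with respect to `μ' = μK`, then for
`2 ≤ q₀` and `q₀ ≤ q ≤ (1 + l(P)) q₀`, `K : ℓ^{q₀}(μ') → ℓ^q(μ)` is a contraction. -/
theorem stmt12 {V : Type*} [Fintype V] [DecidableEq V]
    (K : V → V → ℝ) (μ : V → ℝ)
    (hK : IsKernel K)
    (hμpos : ∀ x, 0 < μ x) (hμ1 : ∑ x, μ x = 1)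
    (hμ'pos : ∀ x, 0 < mulMK μ K x) :
    ∀ q0 q : ℝ, 2 ≤ q0 → q0 ≤ q →
      q ≤ (1 + lsConst (Pker K μ (mulMK μ K)) (mulMK μ K)) * q0 →
      ∀ f : V → ℝ, lpNorm μ q (mulKF K f) ≤ lpNorm (mulMK μ K) q0 f := by
  intro q0 q hq0 hq0q hql f
  have hq2 : (2:ℝ) ≤ q := le_trans hq0 hq0q
  have hqpos : (0:ℝ) < q := by linarith
  have hq0pos : (0:ℝ) < q0 := by linarith
  set g : V → ℝ := fun x => |f x| with hg
  set u : V → ℝ := fun x => g x ^ (q / 2 : ℝ) with hudef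
  have hgnn : ∀ x, 0 ≤ g x := fun x => abs_nonneg _
  have hunn : ∀ x, 0 ≤ u x := fun x => Real.rpow_nonneg (hgnn x) _
  set p : ℝ := 2 * q0 / q with hp
  have hp0 : 0 < p := by positivity
  have hp2 : p ≤ 2 := by rw [hp, div_le_iff₀ hqpos]; linarith
  have h2p : 2 / p = q / q0 := by rw [hp]; field_simp
  have hpl : 2 / p - 1 ≤ lsConst (Pker K μ (mulMK μ K)) (mulMK μ K) := by
    rw [h2p]
    have hd : q / q0 ≤ 1 + lsConst (Pker K μ (mulMK μ K)) (mulMK μ K) := by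
      rw [div_le_iff₀ hq0pos]
      linarith [hql]
    linarith
  have hKg : ∀ x, |mulKF K f x| ≤ mulKF K g x := by
    intro x
    unfold mulKF
    calc |∑ y, K x y * f y| ≤ ∑ y, |K x y * f y| := Finset.abs_sum_le_sum_abs _ _
      _ = ∑ y, K x y * g y := Finset.sum_congr rfl fun y _ => by
          rw [abs_mul, abs_of_nonneg (hK.1 x y)]
  have hKgnn : ∀ x, 0 ≤ mulKF K g x :=
    fun x => Finset.sum_nonneg fun y _ => mul_nonneg (hK.1 x y) (hgnn y)
  have hjensen : ∀ x, mulKF K g x ^ ((q:ℝ) / 2) ≤ mulKF K u x := by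
    intro x
    exact Real.rpow_arith_mean_le_arith_mean_rpow Finset.univ (K x) g
      (fun y _ => hK.1 x y) (hK.2 x) (fun y _ => hgnn y) (by linarith : 1 ≤ q / 2)
  have hstepB : ∀ x, |mulKF K f x| ^ q ≤ mulKF K u x ^ 2 := by
    intro x
    have h1 : |mulKF K f x| ^ q ≤ mulKF K g x ^ q :=
      Real.rpow_le_rpow (abs_nonneg _) (hKg x) hqpos.le
    have h2 : mulKF K g x ^ q = (mulKF K g x ^ (q/2 : ℝ)) ^ (2:ℕ) := by
      rw [← Real.rpow_natCast (mulKF K g x ^ (q/2:ℝ)) 2, ← Real.rpow_mul (hKgnn x)]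
      push_cast
      congr 1
      ring
    have h3 : (mulKF K g x ^ (q/2:ℝ)) ^ (2:ℕ) ≤ mulKF K u x ^ (2:ℕ) :=
      pow_le_pow_left₀ (Real.rpow_nonneg (hKgnn x) _) (hjensen x) 2
    calc |mulKF K f x| ^ q ≤ mulKF K g x ^ q := h1
      _ = (mulKF K g x ^ (q/2:ℝ)) ^ (2:ℕ) := h2
      _ ≤ mulKF K u x ^ (2:ℕ) := h3
  have hsum1 : ∑ x, |mulKF K f x| ^ q * μ x ≤ ∑ z, mulKF K u z ^ 2 * μ z :=
    Finset.sum_le_sum fun x _ => mul_le_mul_of_nonneg_right (hstepB x) (hμpos x).le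
  have hkey := key_gen K μ hK hμpos hμ1 hμ'pos p hp0 hp2 hpl u hunn
  have hup : ∀ x, u x ^ p = g x ^ (q0 : ℝ) := by
    intro x
    show (g x ^ (q/2 : ℝ)) ^ p = g x ^ (q0 : ℝ)
    rw [← Real.rpow_mul (hgnn x)]
    congr 1
    rw [hp]
    field_simp
  have hT0 : 0 ≤ ∑ x, g x ^ (q0:ℝ) * mulMK μ K x :=
    Finset.sum_nonneg fun x _ => mul_nonneg (Real.rpow_nonneg (hgnn x) _) (hμ'pos x).le
  have hchain : ∑ x, |mulKF K f x| ^ q * μ x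
      ≤ (∑ x, g x ^ (q0:ℝ) * mulMK μ K x) ^ (q / q0) := by
    calc ∑ x, |mulKF K f x| ^ q * μ x ≤ ∑ z, mulKF K u z ^ 2 * μ z := hsum1
      _ ≤ (∑ x, u x ^ p * mulMK μ K x) ^ ((2:ℝ)/p) := hkey
      _ = (∑ x, g x ^ (q0:ℝ) * mulMK μ K x) ^ (q / q0) := by
          rw [h2p]
          congr 1
          exact Finset.sum_congr rfl fun x _ => by rw [hup x]
  have hLHS0 : 0 ≤ ∑ x, |mulKF K f x| ^ q * μ x :=
    Finset.sum_nonneg fun x _ => mul_nonneg (Real.rpow_nonneg (abs_nonneg _) _) (hμpos x).le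
  have hmono := Real.rpow_le_rpow hLHS0 hchain (by positivity : (0:ℝ) ≤ 1/q)
  have hsimp : ((∑ x, g x ^ (q0:ℝ) * mulMK μ K x) ^ (q/q0)) ^ ((1:ℝ)/q)
      = (∑ x, g x ^ (q0:ℝ) * mulMK μ K x) ^ ((1:ℝ)/q0) := by
    rw [← Real.rpow_mul hT0]
    congr 1
    field_simp
  rw [hsimp] at hmono
  unfold lpNorm
  exact hmono

end TimeInhomog
end
end

section
/- Let φ : [−1,∞) → ℝ be defined by φ(x) = (1+x)log(1+x) − x for x > −1 (with the convention 0·log 0 = 0, so φ(−1) = 1). Then for all x ∈ [−1,∞), 0 ≤ φ(x) ≤ (2/(1−log 2))·φ(x/2). Consequently, the universal constant ρ in the modified logarithmic Sobolev comparison α(K,μ) ≥ ρ·l'(KK*) can be taken to satisfy ρ ≥ log 2·(1−log 2)/2. -/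
open Real Set

noncomputable def s19c : ℝ := 2 / (1 - Real.log 2)

noncomputable def s19phi : ℝ → ℝ := fun x => (1 + x) * Real.log (1 + x) - x

noncomputable def s19g : ℝ → ℝ := fun x => s19c * s19phi (x / 2) - s19phi x

noncomputable def s19G : ℝ → ℝ := fun x =>
  s19c / 2 * Real.log (1 + x / 2) - Real.log (1 + x)

noncomputable def s19x1 : ℝ := (4 - s19c) / (s19c - 2)

lemma s19h1 : (0:ℝ) < 1 - Real.log 2 := by
  nlinarith [Real.log_two_lt_d9]

lemma s19hc4 : (4:ℝ) < s19c := by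
  rw [s19c, lt_div_iff₀ s19h1]
  nlinarith [Real.log_two_gt_d9]

lemma s19x1_mem : -1 < s19x1 ∧ s19x1 < 0 := by
  have h2 : (0:ℝ) < s19c - 2 := by linarith [s19hc4]
  constructor
  · rw [s19x1, lt_div_iff₀ h2]; linarith [s19hc4]
  · exact div_neg_of_neg_of_pos (by linarith [s19hc4]) h2

lemma s19_hderiv_phi (y : ℝ) (hy : -1 < y) :
    HasDerivAt s19phi (Real.log (1 + y)) y := by
  have hne : (1 + y) ≠ 0 := ne_of_gt (by linarith)
  have h1 : HasDerivAt (fun x : ℝ => 1 + x) 1 y := by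
    simpa using (hasDerivAt_id y).const_add (1:ℝ)
  have hlog : HasDerivAt (fun x : ℝ => Real.log (1 + x)) (1 / (1 + y)) y := by
    simpa using h1.log hne
  have hmul := (h1.mul hlog).sub (hasDerivAt_id y)
  refine HasDerivAt.congr_deriv hmul ?_
  field_simp
  ring

lemma s19_hderiv_g (y : ℝ) (hy : -1 < y) : HasDerivAt s19g (s19G y) y := by
  have hy2 : -1 < y / 2 := by linarith
  have hhalf : HasDerivAt (fun x : ℝ => x / 2) (1/2 : ℝ) y := by
    simpa using (hasDerivAt_id y).div_const 2
  have h1 : HasDerivAt (fun x : ℝ => s19phi (x / 2))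
      (Real.log (1 + y / 2) * (1/2)) y :=
    HasDerivAt.comp (h₂ := s19phi) y (s19_hderiv_phi (y/2) hy2) hhalf
  have h2 := (h1.const_mul s19c).sub (s19_hderiv_phi y hy)
  refine HasDerivAt.congr_deriv h2 ?_
  rw [s19G]; ring

lemma s19_hderiv_G (y : ℝ) (hy : -1 < y) :
    HasDerivAt s19G (s19c / 4 / (1 + y / 2) - 1 / (1 + y)) y := by
  have hy2 : (0:ℝ) < 1 + y / 2 := by linarith
  have hne2 : (1 + y / 2) ≠ 0 := ne_of_gt hy2
  have hne : (1 + y) ≠ 0 := ne_of_gt (by linarith)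
  have hhalf : HasDerivAt (fun x : ℝ => 1 + x / 2) (1/2 : ℝ) y := by
    simpa using ((hasDerivAt_id y).div_const 2).const_add (1:ℝ)
  have h1 : HasDerivAt (fun x : ℝ => 1 + x) 1 y := by
    simpa using (hasDerivAt_id y).const_add (1:ℝ)
  have hl1 := hhalf.log hne2
  have hl2 := h1.log hne
  have h2 := (hl1.const_mul (s19c / 2)).sub hl2
  have h8 : (8 + y * 4 : ℝ) ≠ 0 := by linarith
  have h4 : (4 + y * 2 : ℝ) ≠ 0 := by linarith
  refine HasDerivAt.congr_deriv h2 ?_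
  ring

lemma s19_cont_g : Continuous s19g := by
  have hphi : Continuous s19phi := by
    have hadd : Continuous (fun x : ℝ => 1 + x) := continuous_const.add continuous_id
    have h := Real.continuous_mul_log.comp hadd
    exact h.sub continuous_id
  exact (continuous_const.mul (hphi.comp (continuous_id.div_const 2))).sub hphi

lemma s19_g0 : s19g 0 = 0 := by
  simp [s19g, s19phi]

lemma s19_G0 : s19G 0 = 0 := by
  simp [s19G]

lemma s19_gneg1 : s19g (-1) = 0 := by
  have h1 : s19phi (-1) = 1 := by norm_num [s19phi]
  have h2 : s19phi (-1/2) = (1 - Real.log 2) / 2 := by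
    rw [s19phi]
    have : (1:ℝ) + -1/2 = 2⁻¹ := by norm_num
    rw [this, Real.log_inv]
    ring
  rw [s19g, h1, h2, s19c]
  field_simp [s19h1.ne']
  norm_num

lemma s19_Gderiv_pos {y : ℝ} (h : s19x1 < y) :
    0 < s19c / 4 / (1 + y / 2) - 1 / (1 + y) := by
  have hy : -1 < y := lt_trans s19x1_mem.1 h
  have d1 : (0:ℝ) < 1 + y / 2 := by linarith
  have d2 : (0:ℝ) < 1 + y := by linarith
  have h2 : (0:ℝ) < s19c - 2 := by linarith [s19hc4]
  have h' : 4 - s19c < y * (s19c - 2) := by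
    rw [s19x1, div_lt_iff₀ h2] at h; exact h
  rw [sub_pos, div_lt_div_iff₀ d2 d1]
  nlinarith

lemma s19_Gderiv_neg {y : ℝ} (hy : -1 < y) (h : y < s19x1) :
    s19c / 4 / (1 + y / 2) - 1 / (1 + y) < 0 := by
  have d1 : (0:ℝ) < 1 + y / 2 := by linarith
  have d2 : (0:ℝ) < 1 + y := by linarith
  have h2 : (0:ℝ) < s19c - 2 := by linarith [s19hc4]
  have h' : y * (s19c - 2) < 4 - s19c := by
    rw [s19x1, lt_div_iff₀ h2] at h; exact h
  rw [sub_neg, div_lt_div_iff₀ d1 d2]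
  nlinarith

lemma s19_G_strictMono : StrictMonoOn s19G (Icc s19x1 0) := by
  apply strictMonoOn_of_deriv_pos (convex_Icc _ _)
  · intro y hy
    exact (s19_hderiv_G y (lt_of_lt_of_le s19x1_mem.1 hy.1)).continuousAt.continuousWithinAt
  · intro y hy
    rw [interior_Icc] at hy
    rw [(s19_hderiv_G y (lt_trans s19x1_mem.1 hy.1)).deriv]
    exact s19_Gderiv_pos hy.1

lemma s19_G_strictAnti : StrictAntiOn s19G (Ioc (-1) s19x1) := by
  apply strictAntiOn_of_deriv_neg (convex_Ioc _ _)
  · intro y hy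
    exact (s19_hderiv_G y hy.1).continuousAt.continuousWithinAt
  · intro y hy
    rw [interior_Ioc] at hy
    rw [(s19_hderiv_G y hy.1).deriv]
    exact s19_Gderiv_neg hy.1 hy.2

lemma s19_g_nonneg : ∀ x : ℝ, -1 ≤ x → 0 ≤ s19g x := by
  intro x hx
  rcases le_or_gt x 0 with hx0 | hx0
  · -- x ∈ [-1, 0]
    obtain ⟨m, hm, hmin⟩ := isCompact_Icc.exists_isMinOn
      (⟨-1, left_mem_Icc.2 (by norm_num)⟩ : (Icc (-1:ℝ) 0).Nonempty)
      s19_cont_g.continuousOn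
    have hgm : 0 ≤ s19g m := by
      rcases eq_or_lt_of_le hm.1 with h1 | h1
      · rw [← h1, s19_gneg1]
      rcases eq_or_lt_of_le hm.2 with h2 | h2
      · rw [h2, s19_g0]
      have hloc : IsLocalMin s19g m := hmin.isLocalMin (Icc_mem_nhds h1 h2)
      have hGm : s19G m = 0 := by
        have hd := hloc.deriv_eq_zero
        rwa [(s19_hderiv_g m h1).deriv] at hd
      have hmx1 : m < s19x1 := by
        by_contra hcon
        push_neg at hcon
        have h0mem : (0:ℝ) ∈ Icc s19x1 0 := ⟨le_of_lt s19x1_mem.2, le_refl 0⟩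
        have hmmem : m ∈ Icc s19x1 0 := ⟨hcon, le_of_lt h2⟩
        have := s19_G_strictMono hmmem h0mem h2
        rw [hGm, s19_G0] at this
        exact lt_irrefl 0 this
      have hmono : MonotoneOn s19g (Icc (-1) m) := by
        apply monotoneOn_of_deriv_nonneg (convex_Icc _ _) s19_cont_g.continuousOn
        · intro y hy
          rw [interior_Icc] at hy
          exact (s19_hderiv_g y hy.1).differentiableAt.differentiableWithinAt
        · intro y hy
          rw [interior_Icc] at hy
          rw [(s19_hderiv_g y hy.1).deriv]
          have hGy : s19G m < s19G y :=
            s19_G_strictAnti ⟨hy.1, le_of_lt (lt_trans hy.2 hmx1)⟩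
              ⟨h1, le_of_lt hmx1⟩ hy.2
          rw [hGm] at hGy
          exact le_of_lt hGy
      have hle := hmono (left_mem_Icc.2 (le_of_lt h1)) (right_mem_Icc.2 (le_of_lt h1)) hm.1
      rwa [s19_gneg1] at hle
    exact le_trans hgm (hmin ⟨hx, hx0⟩)
  · -- x > 0
    have hmono : MonotoneOn s19g (Ici 0) := by
      apply monotoneOn_of_deriv_nonneg (convex_Ici 0) s19_cont_g.continuousOn
      · intro y hy
        rw [interior_Ici] at hy
        exact (s19_hderiv_g y (by linarith [mem_Ioi.1 hy])).differentiableAt.differentiableWithinAt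
      · intro y hy
        rw [interior_Ici] at hy
        have hy0 : (0:ℝ) < y := hy
        rw [(s19_hderiv_g y (by linarith)).deriv]
        have h2 : (0:ℝ) < 1 + y / 2 := by linarith
        have hl1 : Real.log (1 + y) ≤ 2 * Real.log (1 + y / 2) := by
          have hsq : (1 + y) ≤ (1 + y / 2) ^ 2 := by nlinarith
          calc Real.log (1 + y) ≤ Real.log ((1 + y / 2) ^ 2) :=
                Real.log_le_log (by linarith) hsq
            _ = 2 * Real.log (1 + y / 2) := by
                rw [Real.log_pow]; norm_num
        have hl0 : 0 ≤ Real.log (1 + y / 2) := Real.log_nonneg (by linarith)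
        have hc := s19hc4
        rw [s19G]
        nlinarith
    have hle := hmono self_mem_Ici (mem_Ici.2 (le_of_lt hx0)) (le_of_lt hx0)
    rwa [s19_g0] at hle

lemma s19_phi_nonneg : ∀ x : ℝ, -1 ≤ x → 0 ≤ s19phi x := by
  intro x hx
  rcases eq_or_lt_of_le hx with h | h
  · rw [← h]; norm_num [s19phi]
  · have ht : (0:ℝ) < 1 + x := by linarith
    have hinv : (0:ℝ) < (1 + x)⁻¹ := inv_pos.2 ht
    have hlog := Real.log_le_sub_one_of_pos hinv
    rw [Real.log_inv] at hlog
    have hmul : (1 + x) * (1 + x)⁻¹ = 1 := mul_inv_cancel₀ (ne_of_gt ht)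
    rw [s19phi]
    nlinarith

/-- Proposition 4.16 of the paper: for
`φ(x) = (1+x)log(1+x) - x` (with `log 0 = 0`, so `φ(-1) = 1`), one has
`0 ≤ φ(x) ≤ (2/(1 - log 2)) φ(x/2)` for all `x ∈ [-1,∞)`. This gives the bound
`ρ ≥ log 2 · (1 - log 2)/2` on the universal constant in the modified
logarithmic Sobolev comparison of Diaconis–Lebeau–Michel. -/
theorem stmt19 :
    ∀ x : ℝ, -1 ≤ x →
      0 ≤ (1 + x) * Real.log (1 + x) - x ∧
      (1 + x) * Real.log (1 + x) - x ≤
        (2 / (1 - Real.log 2)) * ((1 + x / 2) * Real.log (1 + x / 2) - x / 2) := by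
  intro x hx
  refine ⟨by simpa [s19phi] using s19_phi_nonneg x hx, ?_⟩
  have h := s19_g_nonneg x hx
  rw [s19g, s19phi, s19c] at h
  simp only [s19phi] at h ⊢
  linarith
end
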